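/- For every quantum channel N from a d_A-dimensional system A to a d_B-dimensional system B (with d_A ≥ 2), the maximum causal effect satisfies CE_max(N) = max over pairs of unit vectors ψ, ψ⊥ ∈ ℂ^{d_A} with ⟨ψ|ψ⊥⟩ = 0 of (1/2)·‖N(|ψ⟩⟨ψ|) − N(|ψ⊥⟩⟨ψ⊥|)‖₁; in particular the supremum defining CE_max is attained on pairs of orthogonal pure states. -/

import Mathlib

open Matrix ComplexOrder

/-- Trace norm of a square complex matrix. -/
noncomputable def traceNorm {n : Type*} [Fintype n] [DecidableEq n]
    (X : Matrix n n ℂ) : ℝ :=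
  (((Matrix.posSemidef_conjTranspose_mul_self X).1.eigenvectorUnitary.1 *
      diagonal (((↑) : ℝ → ℂ) ∘ (√·) ∘ (Matrix.posSemidef_conjTranspose_mul_self X).1.eigenvalues) *
      (star (Matrix.posSemidef_conjTranspose_mul_self X).1.eigenvectorUnitary : Matrix n n ℂ)).trace).re

/-- A density matrix: positive semidefinite with unit trace. -/
def IsDensityMatrix {n : Type*} [Fintype n] [DecidableEq n] (ρ : Matrix n n ℂ) : Prop :=
  ρ.PosSemidef ∧ ρ.trace = 1

/-- A quantum channel: a linear map admitting a Kraus representation. -/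
def IsQuantumChannel {dA dB : ℕ}
    (N : Matrix (Fin dA) (Fin dA) ℂ →ₗ[ℂ] Matrix (Fin dB) (Fin dB) ℂ) : Prop :=
  ∃ (k : ℕ) (K : Fin k → Matrix (Fin dB) (Fin dA) ℂ),
    (∀ X, N X = ∑ i, K i * X * (K i)ᴴ) ∧ (∑ i, (K i)ᴴ * K i = 1)

/-- Maximum causal effect. -/
noncomputable def CEmax {dA dB : ℕ}
    (N : Matrix (Fin dA) (Fin dA) ℂ →ₗ[ℂ] Matrix (Fin dB) (Fin dB) ℂ) : ℝ :=
  sSup {x : ℝ | ∃ ρ ρ' : Matrix (Fin dA) (Fin dA) ℂ,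
    IsDensityMatrix ρ ∧ IsDensityMatrix ρ' ∧ ρ ≠ ρ' ∧
    x = traceNorm (N ρ - N ρ') / traceNorm (ρ - ρ')}

/-- Minimum causal effect. -/
noncomputable def CEmin {dA dB : ℕ}
    (N : Matrix (Fin dA) (Fin dA) ℂ →ₗ[ℂ] Matrix (Fin dB) (Fin dB) ℂ) : ℝ :=
  sInf {x : ℝ | ∃ ρ ρ' : Matrix (Fin dA) (Fin dA) ℂ,
    IsDensityMatrix ρ ∧ IsDensityMatrix ρ' ∧ ρ ≠ ρ' ∧
    x = traceNorm (N ρ - N ρ') / traceNorm (ρ - ρ')}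

/-- Minimum distinguishability preservation. -/
noncomputable def DPmin {dA dB : ℕ}
    (N : Matrix (Fin dA) (Fin dA) ℂ →ₗ[ℂ] Matrix (Fin dB) (Fin dB) ℂ) : ℝ :=
  sInf {x : ℝ | ∃ p : ℝ, 0 ≤ p ∧ p ≤ 1 ∧
    ∃ ρ ρ' : Matrix (Fin dA) (Fin dA) ℂ,
      IsDensityMatrix ρ ∧ IsDensityMatrix ρ' ∧ ρ ≠ ρ' ∧
      x = traceNorm ((p : ℂ) • N ρ - ((1 - p : ℝ) : ℂ) • N ρ') /
          traceNorm ((p : ℂ) • ρ - ((1 - p : ℝ) : ℂ) • ρ')}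

/-! For density matrices `ρ, ρ'`, write the traceless Hermitian `Δ = ρ - ρ'` as
`∑ λᵢ |vᵢ⟩⟨vᵢ|` in an orthonormal eigenbasis and put `t = ∑ λᵢ⁺ = ∑ λᵢ⁻ = ‖Δ‖₁ / 2`. Then
`Δ = ∑ᵢⱼ (λᵢ⁺ λⱼ⁻ / t) (|vᵢ⟩⟨vᵢ| - |vⱼ⟩⟨vⱼ|)` has nonnegative weights of total mass `t`, so the
triangle inequality for the trace norm bounds `‖N Δ‖₁` by `t` times the largest value of
`‖N |ψ⟩⟨ψ| - N |φ⟩⟨φ|‖₁` over orthonormal pairs, which is attained by compactness. Conversely an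
orthonormal pair is itself a pair of density matrices at trace distance `2`. -/

open scoped MatrixOrder

theorem Real.sign_mul_self (x : ℝ) : Real.sign x * x = |x| := by
  rcases lt_trichotomy x 0 with hx | rfl | hx
  · rw [Real.sign_of_neg hx, abs_of_neg hx]; ring
  · simp
  · rw [Real.sign_of_pos hx, abs_of_pos hx]; ring

section

variable {n : Type*} [Fintype n] [DecidableEq n]

theorem traceNorm_eq_re_trace_abs (X : Matrix n n ℂ) : traceNorm X = (CFC.abs X).trace.re := by
  have hX := posSemidef_conjTranspose_mul_self X
  rw [CFC.abs, star_eq_conjTranspose, CFC.sqrt_eq_real_sqrt _ (nonneg_iff_posSemidef.mpr hX),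
    cfcₙ_eq_cfc, hX.1.cfc_eq, IsHermitian.cfc, Unitary.conjStarAlgAut_apply]
  rfl

-- Under the L2 operator norm, whose topology is the usual one, matrices form a C⋆-algebra.
open scoped Matrix.Norms.L2Operator in
@[fun_prop]
theorem continuous_traceNorm : Continuous (traceNorm : Matrix n n ℂ → ℝ) := by
  rw [show traceNorm = fun X : Matrix n n ℂ => (CFC.abs X).trace.re from
    funext traceNorm_eq_re_trace_abs]
  exact Complex.continuous_re.comp (continuous_id.matrix_trace.comp CFC.continuous_abs)

theorem traceNorm_zero : traceNorm (0 : Matrix n n ℂ) = 0 := by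
  simp [traceNorm_eq_re_trace_abs]

theorem traceNorm_nonneg (X : Matrix n n ℂ) : 0 ≤ traceNorm X := by
  rw [traceNorm_eq_re_trace_abs]
  exact (Complex.nonneg_iff.mp (nonneg_iff_posSemidef.mp (CFC.abs_nonneg X)).trace_nonneg).1

theorem Matrix.IsHermitian.trace_cfc {A : Matrix n n ℂ} (hA : A.IsHermitian) (f : ℝ → ℝ) :
    (cfc f A).trace = ∑ i, (f (hA.eigenvalues i) : ℂ) := by
  rw [hA.cfc_eq, IsHermitian.cfc, Unitary.conjStarAlgAut_apply, trace_mul_cycle,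
    Unitary.coe_star_mul_self, one_mul, trace_diagonal]
  rfl

theorem Matrix.IsHermitian.traceNorm_eq_sum_abs_eigenvalues {A : Matrix n n ℂ}
    (hA : A.IsHermitian) : traceNorm A = ∑ i, |hA.eigenvalues i| := by
  rw [traceNorm_eq_re_trace_abs, CFC.abs_eq_cfc_norm A hA.isSelfAdjoint, hA.trace_cfc]
  simp [Complex.re_sum]

theorem Matrix.IsHermitian.eq_zero_of_traceNorm_eq_zero {A : Matrix n n ℂ} (hA : A.IsHermitian)
    (h : traceNorm A = 0) : A = 0 := by
  rw [hA.traceNorm_eq_sum_abs_eigenvalues,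
    Finset.sum_eq_zero_iff_of_nonneg fun i _ => abs_nonneg _] at h
  exact hA.eigenvalues_eq_zero_iff.mp (funext fun i => abs_eq_zero.mp (h i (Finset.mem_univ i)))

theorem Matrix.PosSemidef.trace_mul_nonneg {X Y : Matrix n n ℂ} (hX : X.PosSemidef)
    (hY : Y.PosSemidef) : 0 ≤ (X * Y).trace := by
  set R := CFC.sqrt X
  have hR : R.PosSemidef := nonneg_iff_posSemidef.mp (CFC.sqrt_nonneg X)
  have hRR : R * R = X := CFC.sqrt_mul_sqrt_self X (nonneg_iff_posSemidef.mpr hX)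
  have hconj : (X * Y).trace = (R * Y * Rᴴ).trace := by
    rw [← hRR, hR.1.eq, Matrix.mul_assoc, trace_mul_comm, Matrix.mul_assoc]
  rw [hconj]
  exact (hY.mul_mul_conjTranspose_same R).trace_nonneg

/-- With `s = sign (P - Q)` one has `‖P - Q‖₁ = tr (s P) - tr (s Q)`, and `-1 ≤ s ≤ 1`. -/
theorem traceNorm_sub_le {P Q : Matrix n n ℂ} (hP : P.PosSemidef) (hQ : Q.PosSemidef) :
    traceNorm (P - Q) ≤ (P.trace + Q.trace).re := by
  set D := P - Q
  have hD : IsSelfAdjoint D := (hP.1.sub hQ.1).isSelfAdjoint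
  have hcont : ContinuousOn Real.sign (spectrum ℝ D) :=
    (Matrix.finite_real_spectrum (A := D)).continuousOn _
  have habs : CFC.abs D = cfc Real.sign D * D := by
    rw [CFC.abs_eq_cfc_norm D hD]
    nth_rewrite 3 [← cfc_id' ℝ D]
    rw [← cfc_mul _ _ D hcont]
    simp only [Real.norm_eq_abs, Real.sign_mul_self]
  have hP' : 0 ≤ ((1 - cfc Real.sign D) * P).trace := by
    refine (nonneg_iff_posSemidef.mp ?_).trace_mul_nonneg hP
    rw [← cfc_one ℝ D, ← cfc_sub _ _ D (by fun_prop) hcont]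
    refine cfc_nonneg fun x _ => ?_
    rcases Real.sign_apply_eq x with h | h | h <;> simp [h]
  have hQ' : 0 ≤ ((1 + cfc Real.sign D) * Q).trace := by
    refine (nonneg_iff_posSemidef.mp ?_).trace_mul_nonneg hQ
    rw [← cfc_one ℝ D, ← cfc_add (a := D) _ _ (by fun_prop) hcont]
    refine cfc_nonneg fun x _ => ?_
    rcases Real.sign_apply_eq x with h | h | h <;> simp [h]
  rw [traceNorm_eq_re_trace_abs, habs, Matrix.mul_sub]
  simp only [Matrix.sub_mul, Matrix.add_mul, Matrix.one_mul, trace_sub, trace_add] at hP' hQ' ⊢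
  have h1 := (Complex.nonneg_iff.mp hP').1
  have h2 := (Complex.nonneg_iff.mp hQ').1
  simp only [Complex.sub_re, Complex.add_re] at h1 h2 ⊢
  linarith

theorem traceNorm_sum_smul_le {ι : Type*} (s : Finset ι) {c : ι → ℝ} {A : ι → Matrix n n ℂ}
    (hc : ∀ i ∈ s, 0 ≤ c i) (hA : ∀ i ∈ s, (A i).IsHermitian) :
    traceNorm (∑ i ∈ s, c i • A i) ≤ ∑ i ∈ s, c i * traceNorm (A i) := by
  have hjordan : ∑ i ∈ s, c i • A i = ∑ i ∈ s, c i • (A i)⁺ - ∑ i ∈ s, c i • (A i)⁻ := by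
    rw [← Finset.sum_sub_distrib]
    refine Finset.sum_congr rfl fun i hi => ?_
    rw [← smul_sub, CFC.posPart_sub_negPart _ (hA i hi).isSelfAdjoint]
  have hpos : (∑ i ∈ s, c i • (A i)⁺).PosSemidef := nonneg_iff_posSemidef.mp <|
    Finset.sum_nonneg fun i hi => smul_nonneg (hc i hi) (CFC.posPart_nonneg _)
  have hneg : (∑ i ∈ s, c i • (A i)⁻).PosSemidef := nonneg_iff_posSemidef.mp <|
    Finset.sum_nonneg fun i hi => smul_nonneg (hc i hi) (CFC.negPart_nonneg _)
  refine hjordan ▸ (traceNorm_sub_le hpos hneg).trans_eq ?_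
  rw [← trace_add, ← Finset.sum_add_distrib, trace_sum, Complex.re_sum]
  refine Finset.sum_congr rfl fun i hi => ?_
  rw [← smul_add, CFC.posPart_add_negPart _ (hA i hi).isSelfAdjoint, trace_smul,
    Complex.smul_re, traceNorm_eq_re_trace_abs, smul_eq_mul]

theorem traceNorm_vecMulVec_sub_vecMulVec_of_orthonormal {ψ φ : n → ℂ}
    (hψ : star ψ ⬝ᵥ ψ = 1) (hφ : star φ ⬝ᵥ φ = 1) (hψφ : star ψ ⬝ᵥ φ = 0) :
    traceNorm (vecMulVec ψ (star ψ) - vecMulVec φ (star φ)) = 2 := by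
  have hφψ : star φ ⬝ᵥ ψ = 0 := by rw [star_dotProduct, hψφ, star_zero]
  set P := vecMulVec ψ (star ψ)
  set Q := vecMulVec φ (star φ)
  have hP : 0 ≤ P := nonneg_iff_posSemidef.mpr (posSemidef_vecMulVec_self_star ψ)
  have hQ : 0 ≤ Q := nonneg_iff_posSemidef.mpr (posSemidef_vecMulVec_self_star φ)
  have hPP : P * P = P := by simp only [P, vecMulVec_mul_vecMulVec, hψ, one_smul]
  have hQQ : Q * Q = Q := by simp only [Q, vecMulVec_mul_vecMulVec, hφ, one_smul]
  have hPQ : P * Q = 0 := by simp [P, Q, vecMulVec_mul_vecMulVec, hψφ]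
  have hQP : Q * P = 0 := by simp [P, Q, vecMulVec_mul_vecMulVec, hφψ]
  have habs : CFC.abs (P - Q) = P + Q := by
    rw [CFC.abs, CFC.sqrt_eq_iff _ _ (star_mul_self_nonneg _) (add_nonneg hP hQ), star_sub,
      hP.star_eq, hQ.star_eq]
    simp only [Matrix.add_mul, Matrix.mul_add, Matrix.sub_mul, Matrix.mul_sub, hPP, hQQ, hPQ, hQP]
    abel
  rw [traceNorm_eq_re_trace_abs, habs, trace_add, trace_vecMulVec, trace_vecMulVec,
    dotProduct_comm, hψ, dotProduct_comm, hφ]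
  norm_num

theorem Matrix.IsHermitian.star_eigenvectorBasis_dotProduct {A : Matrix n n ℂ}
    (hA : A.IsHermitian) (i j : n) :
    star ⇑(hA.eigenvectorBasis i) ⬝ᵥ ⇑(hA.eigenvectorBasis j) = if i = j then 1 else 0 := by
  rw [dotProduct_comm, ← EuclideanSpace.inner_eq_star_dotProduct, hA.eigenvectorBasis.inner_eq_ite]

theorem Matrix.IsHermitian.eq_sum_eigenvalues_smul_vecMulVec {A : Matrix n n ℂ}
    (hA : A.IsHermitian) :
    A = ∑ i, hA.eigenvalues i •
      vecMulVec ⇑(hA.eigenvectorBasis i) (star ⇑(hA.eigenvectorBasis i)) := by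
  conv_lhs => rw [hA.spectral_theorem, Unitary.conjStarAlgAut_apply]
  ext a b
  rw [mul_apply, Matrix.sum_apply]
  refine Finset.sum_congr rfl fun k _ => ?_
  simp only [mul_diagonal, Matrix.smul_apply, vecMulVec_apply, Complex.real_smul,
    eigenvectorUnitary_apply, Complex.coe_algebraMap, Function.comp_apply, star_apply,
    RCLike.star_def, Pi.star_apply]
  ring

end

theorem Real.posPart_mul_negPart (x : ℝ) : x⁺ * x⁻ = 0 := by
  rcases le_total x 0 with h | h
  · rw [posPart_eq_zero.2 h, zero_mul]
  · rw [negPart_eq_zero.2 h, mul_zero]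

section

variable {ι : Type*} [Fintype ι] {a : ι → ℝ}

theorem sum_negPart_eq_sum_posPart (ha : ∑ i, a i = 0) : ∑ i, (a i)⁻ = ∑ i, (a i)⁺ := by
  rw [eq_comm, ← sub_eq_zero, ← Finset.sum_sub_distrib, ← ha]
  simp only [posPart_sub_negPart]

theorem sum_abs_eq_two_mul_sum_posPart (ha : ∑ i, a i = 0) : ∑ i, |a i| = 2 * ∑ i, (a i)⁺ := by
  simp only [← posPart_add_negPart, Finset.sum_add_distrib, sum_negPart_eq_sum_posPart ha]
  ring

/-- The positive parts are matched against the negative parts in proportion. -/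
theorem sum_smul_eq_sum_posPart_mul_negPart_smul_sub {E : Type*} [AddCommGroup E] [Module ℝ E]
    (ha : ∑ i, a i = 0) (hpos : ∑ i, (a i)⁺ ≠ 0) (x : ι → E) :
    ∑ i, a i • x i = ∑ i, ∑ j, ((a i)⁺ * (a j)⁻ / ∑ k, (a k)⁺) • (x i - x j) := by
  set t := ∑ k, (a k)⁺
  have hneg : ∑ j, (a j)⁻ = t := sum_negPart_eq_sum_posPart ha
  have hrow : ∀ i, ∑ j, (a i)⁺ * (a j)⁻ / t = (a i)⁺ := fun i => by
    rw [← Finset.sum_div, ← Finset.mul_sum, hneg, mul_div_assoc, div_self hpos, mul_one]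
  have hcol : ∀ j, ∑ i, (a i)⁺ * (a j)⁻ / t = (a j)⁻ := fun j => by
    rw [← Finset.sum_div, ← Finset.sum_mul, mul_div_right_comm, div_self hpos, one_mul]
  simp only [smul_sub, Finset.sum_sub_distrib]
  rw [Finset.sum_comm (f := fun i j => ((a i)⁺ * (a j)⁻ / t) • x j)]
  simp only [← Finset.sum_smul, hrow, hcol, ← Finset.sum_sub_distrib, ← sub_smul,
    posPart_sub_negPart]

end

theorem traceNorm_map_le_of_orthonormal_bound {m n : Type*} [Fintype m] [DecidableEq m]
    [Fintype n] [DecidableEq n]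
    {N : Matrix m m ℂ →ₗ[ℂ] Matrix n n ℂ} (hN : ∀ X, X.IsHermitian → (N X).IsHermitian) {M : ℝ}
    (hM : ∀ ψ φ : m → ℂ, star ψ ⬝ᵥ ψ = 1 → star φ ⬝ᵥ φ = 1 → star ψ ⬝ᵥ φ = 0 →
      traceNorm (N (vecMulVec ψ (star ψ)) - N (vecMulVec φ (star φ))) ≤ 2 * M)
    {Δ : Matrix m m ℂ} (hΔ : Δ.IsHermitian) (htr : Δ.trace = 0) :
    traceNorm (N Δ) ≤ M * traceNorm Δ := by
  set l := hΔ.eigenvalues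
  set v := fun i => ⇑(hΔ.eigenvectorBasis i)
  set t := ∑ i, (l i)⁺
  set D : m × m → Matrix n n ℂ := fun p =>
    N (vecMulVec (v p.1) (star (v p.1))) - N (vecMulVec (v p.2) (star (v p.2)))
  have hl : ∑ i, l i = 0 := by
    have h : ((∑ i, l i : ℝ) : ℂ) = 0 := by
      push_cast
      exact hΔ.trace_eq_sum_eigenvalues ▸ htr
    exact_mod_cast h
  have hnorm : traceNorm Δ = 2 * t := by
    rw [hΔ.traceNorm_eq_sum_abs_eigenvalues, sum_abs_eq_two_mul_sum_posPart hl]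
  by_cases ht : t = 0
  · simp [hΔ.eq_zero_of_traceNorm_eq_zero (by rw [hnorm, ht, mul_zero]), traceNorm_zero]
  set c : m × m → ℝ := fun p => (l p.1)⁺ * (l p.2)⁻ / t
  have hc : ∀ p, 0 ≤ c p := fun p => by positivity
  have hcsum : ∑ p, c p = t := by
    rw [Fintype.sum_prod_type]
    simp only [c, ← Finset.sum_div, ← Finset.mul_sum, ← Finset.sum_mul,
      sum_negPart_eq_sum_posPart hl]
    exact mul_div_cancel_right₀ t ht
  have hdecomp : N Δ = ∑ p, c p • D p := by
    conv_lhs => rw [hΔ.eq_sum_eigenvalues_smul_vecMulVec]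
    simp only [map_sum, LinearMap.map_smul_of_tower]
    rw [sum_smul_eq_sum_posPart_mul_negPart_smul_sub hl ht, Fintype.sum_prod_type]
  have hD : ∀ p, c p * traceNorm (D p) ≤ c p * (2 * M) := by
    rintro ⟨i, j⟩
    rcases eq_or_ne i j with rfl | hij
    · simp [c, Real.posPart_mul_negPart]
    · refine mul_le_mul_of_nonneg_left (hM _ _ ?_ ?_ ?_) (hc _) <;>
        simp [v, hΔ.star_eigenvectorBasis_dotProduct, hij]
  calc traceNorm (N Δ)
      ≤ ∑ p, c p * traceNorm (D p) :=
        hdecomp ▸ traceNorm_sum_smul_le _ (fun p _ => hc p) fun p _ =>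
          (hN _ (posSemidef_vecMulVec_self_star _).1).sub
            (hN _ (posSemidef_vecMulVec_self_star _).1)
    _ ≤ ∑ p, c p * (2 * M) := Finset.sum_le_sum fun p _ => hD p
    _ = M * traceNorm Δ := by rw [← Finset.sum_mul, hcsum, hnorm]; ring

theorem norm_le_one_of_star_dotProduct_self_eq_one {m : Type*} [Fintype m] {ψ : m → ℂ}
    (hψ : star ψ ⬝ᵥ ψ = 1) : ‖ψ‖ ≤ 1 := by
  have hnorm : ‖WithLp.toLp 2 ψ‖ = 1 := by
    have h : ‖WithLp.toLp 2 ψ‖ ^ 2 = 1 := by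
      rw [@norm_sq_eq_re_inner ℂ, EuclideanSpace.inner_toLp_toLp, dotProduct_comm, hψ,
        RCLike.one_re]
    exact (pow_eq_one_iff_of_nonneg (norm_nonneg _) two_ne_zero).mp h
  exact (pi_norm_le_iff_of_nonneg zero_le_one).mpr fun i =>
    hnorm ▸ PiLp.norm_apply_le (WithLp.toLp 2 ψ) i

theorem isCompact_orthonormalPairs {m : Type*} [Fintype m] :
    IsCompact {p : (m → ℂ) × (m → ℂ) |
      star p.1 ⬝ᵥ p.1 = 1 ∧ star p.2 ⬝ᵥ p.2 = 1 ∧ star p.1 ⬝ᵥ p.2 = 0} := by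
  refine Metric.isCompact_of_isClosed_isBounded ?_ ?_
  · refine (isClosed_eq ?_ continuous_const).inter
      ((isClosed_eq ?_ continuous_const).inter (isClosed_eq ?_ continuous_const)) <;>
    exact Continuous.dotProduct (by fun_prop) (by fun_prop)
  · refine (Metric.isBounded_closedBall (x := 0) (r := 1)).subset fun p hp => ?_
    rw [Metric.mem_closedBall, dist_zero_right, Prod.norm_def]
    exact max_le (norm_le_one_of_star_dotProduct_self_eq_one hp.1)
      (norm_le_one_of_star_dotProduct_self_eq_one hp.2.1)

theorem IsQuantumChannel.isHermitian_map {dA dB : ℕ}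
    {N : Matrix (Fin dA) (Fin dA) ℂ →ₗ[ℂ] Matrix (Fin dB) (Fin dB) ℂ} (hN : IsQuantumChannel N)
    {X : Matrix (Fin dA) (Fin dA) ℂ} (hX : X.IsHermitian) : (N X).IsHermitian := by
  obtain ⟨k, K, hK, -⟩ := hN
  rw [hK]
  exact (isSelfAdjoint_sum _ fun i _ =>
    (isHermitian_mul_mul_conjTranspose (K i) hX).isSelfAdjoint).isHermitian

theorem isDensityMatrix_vecMulVec {n : Type*} [Fintype n] [DecidableEq n] {ψ : n → ℂ}
    (hψ : star ψ ⬝ᵥ ψ = 1) :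
    IsDensityMatrix (vecMulVec ψ (star ψ)) :=
  ⟨posSemidef_vecMulVec_self_star ψ, by rw [trace_vecMulVec, dotProduct_comm, hψ]⟩

theorem CEmax_eq_of_isMaxOn {dA dB : ℕ}
    {N : Matrix (Fin dA) (Fin dA) ℂ →ₗ[ℂ] Matrix (Fin dB) (Fin dB) ℂ}
    (hN : ∀ X, X.IsHermitian → (N X).IsHermitian) {ψ φ : Fin dA → ℂ}
    (hψ : star ψ ⬝ᵥ ψ = 1) (hφ : star φ ⬝ᵥ φ = 1) (hψφ : star ψ ⬝ᵥ φ = 0)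
    (hmax : ∀ ψ' φ' : Fin dA → ℂ, star ψ' ⬝ᵥ ψ' = 1 → star φ' ⬝ᵥ φ' = 1 → star ψ' ⬝ᵥ φ' = 0 →
      traceNorm (N (vecMulVec ψ' (star ψ')) - N (vecMulVec φ' (star φ'))) ≤
        traceNorm (N (vecMulVec ψ (star ψ)) - N (vecMulVec φ (star φ)))) :
    CEmax N = traceNorm (N (vecMulVec ψ (star ψ)) - N (vecMulVec φ (star φ))) / 2 := by
  have htwo := traceNorm_vecMulVec_sub_vecMulVec_of_orthonormal hψ hφ hψφ
  refine IsGreatest.csSup_eq ⟨⟨_, _, isDensityMatrix_vecMulVec hψ, isDensityMatrix_vecMulVec hφ,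
    fun h => by simp [h, traceNorm_zero] at htwo, by rw [htwo]⟩, ?_⟩
  rintro x ⟨ρ, ρ', hρ, hρ', -, rfl⟩
  refine div_le_of_le_mul₀ (traceNorm_nonneg _) (div_nonneg (traceNorm_nonneg _) two_pos.le) ?_
  rw [← map_sub]
  refine traceNorm_map_le_of_orthonormal_bound hN (fun ψ' φ' h₁ h₂ h => ?_)
    (hρ.1.1.sub hρ'.1.1) (by rw [trace_sub, hρ.2, hρ'.2, sub_self])
  linarith [hmax ψ' φ' h₁ h₂ h]

/-- **The maximum causal effect is attained on orthogonal pure states.**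
For every quantum channel `N` from a `dA`-dimensional system (`dA ≥ 2`) to a `dB`-dimensional
system, `CEmax N` is the greatest element of the set of values
`(1/2)·‖N(|ψ⟩⟨ψ|) − N(|ψ⊥⟩⟨ψ⊥|)‖₁` over pairs of orthogonal unit vectors `ψ, ψ⊥`. -/
theorem CEmax_isGreatest_orthogonal_pure_states {dA dB : ℕ} (hdA : 2 ≤ dA)
    (N : Matrix (Fin dA) (Fin dA) ℂ →ₗ[ℂ] Matrix (Fin dB) (Fin dB) ℂ)
    (hN : IsQuantumChannel N) :
    IsGreatest
      {x : ℝ | ∃ ψ ψp : Fin dA → ℂ,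
        star ψ ⬝ᵥ ψ = 1 ∧ star ψp ⬝ᵥ ψp = 1 ∧ star ψ ⬝ᵥ ψp = 0 ∧
        x = traceNorm (N (vecMulVec ψ (star ψ)) - N (vecMulVec ψp (star ψp))) / 2}
      (CEmax N) := by
  have hNc := N.continuous_of_finiteDimensional
  obtain ⟨i, j, hij⟩ := Fin.nontrivial_iff_two_le.mpr hdA
  obtain ⟨⟨ψ, φ⟩, ⟨hψ, hφ, hψφ⟩, hmax⟩ := isCompact_orthonormalPairs.exists_isMaxOn
    ⟨(Pi.single i 1, Pi.single j 1), by simp [dotProduct_single, hij]⟩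
    (f := fun p : (Fin dA → ℂ) × (Fin dA → ℂ) =>
      traceNorm (N (vecMulVec p.1 (star p.1)) - N (vecMulVec p.2 (star p.2))))
    (by fun_prop)
  have hmax' := fun ψ' φ' h₁ h₂ h => isMaxOn_iff.mp hmax (ψ', φ') ⟨h₁, h₂, h⟩
  rw [CEmax_eq_of_isMaxOn (fun _ => hN.isHermitian_map) hψ hφ hψφ hmax']
  refine ⟨⟨ψ, φ, hψ, hφ, hψφ, rfl⟩, ?_⟩
  rintro x ⟨ψ', φ', h₁, h₂, h, rfl⟩
  exact div_le_div_of_nonneg_right (hmax' ψ' φ' h₁ h₂ h) two_pos.le
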